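/- arXiv:2305.07755 — 2 statements merged into one kernel-verified Lean document; each statement's English description precedes it below -/
import Mathlib

section
/- Under the local assumptions, suppose x ∈ B(x*, δ) with F(x) ≠ 0, and let d be the LMMSS direction at x, i.e. the solution of (J(x)ᵀJ(x) + λ(x)LᵀL)d = −J(x)ᵀF(x) with λ(x) = ‖F(x)‖². Then ‖J(x)d + F(x)‖ ≤ c₄·dist(x, X*)², where c₄ = √(c₁² + c_F²‖L‖²). -/
set_option maxHeartbeats 1000000


open Matrix Metric RealInnerProductSpace

/-- The continuous linear map on Euclidean spaces induced by a real matrix. -/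
noncomputable def matCLM {m n : ℕ} (A : Matrix (Fin m) (Fin n) ℝ) :
    EuclideanSpace ℝ (Fin n) →L[ℝ] EuclideanSpace ℝ (Fin m) :=
  LinearMap.toContinuousLinearMap (Matrix.toEuclideanLin A)

lemma matCLM_adj {m n : ℕ} (A : Matrix (Fin m) (Fin n) ℝ)
    (v : EuclideanSpace ℝ (Fin n)) (w : EuclideanSpace ℝ (Fin m)) :
    (inner ℝ (matCLM A v) (w) : ℝ) = (inner ℝ (v) (matCLM Aᵀ w) : ℝ) := by
  have hAt : Aᵀ = Aᴴ := by
    ext i j; simp [Matrix.conjTranspose_apply]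
  rw [hAt]
  simp only [matCLM, LinearMap.coe_toContinuousLinearMap']
  rw [Matrix.toEuclideanLin_conjTranspose_eq_adjoint, LinearMap.adjoint_inner_right]

lemma matCLM_adj' {m n : ℕ} (A : Matrix (Fin m) (Fin n) ℝ)
    (w : EuclideanSpace ℝ (Fin m)) (v : EuclideanSpace ℝ (Fin n)) :
    (inner ℝ (matCLM Aᵀ w) (v) : ℝ) = (inner ℝ (w) (matCLM A v) : ℝ) := by
  rw [real_inner_comm, ← matCLM_adj, real_inner_comm]

lemma matCLM_add {m n : ℕ} (A B : Matrix (Fin m) (Fin n) ℝ) (v : EuclideanSpace ℝ (Fin n)) :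
    matCLM (A + B) v = matCLM A v + matCLM B v := by
  simp [matCLM, Matrix.toEuclideanLin_apply, Matrix.add_mulVec]

lemma matCLM_smul {m n : ℕ} (c : ℝ) (A : Matrix (Fin m) (Fin n) ℝ)
    (v : EuclideanSpace ℝ (Fin n)) :
    matCLM (c • A) v = c • matCLM A v := by
  simp [matCLM, Matrix.toEuclideanLin_apply, Matrix.smul_mulVec]

lemma matCLM_mul {m n k : ℕ} (A : Matrix (Fin m) (Fin n) ℝ) (B : Matrix (Fin n) (Fin k) ℝ)
    (v : EuclideanSpace ℝ (Fin k)) :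
    matCLM (A * B) v = matCLM A (matCLM B v) := by
  simp [matCLM, Matrix.toEuclideanLin_apply, Matrix.mulVec_mulVec]

/-- under the local assumptions, if `x ∈ B(x*, δ)` with `F(x) ≠ 0` and `d` is the
LMMSS direction at `x` (with `λ(x) = ‖F(x)‖²`), then `‖J(x)d + F(x)‖ ≤ c₄ · dist(x, X*)²`
with `c₄ = √(c₁² + c_F²‖L‖²)`. -/
theorem lmmss_linearized_residual_bound
    (n m p : ℕ)
    (F : EuclideanSpace ℝ (Fin n) → EuclideanSpace ℝ (Fin m))
    (J : EuclideanSpace ℝ (Fin n) → Matrix (Fin m) (Fin n) ℝ)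
    (hdiff : ∀ x, HasFDerivAt F (matCLM (J x)) x)
    (hJcont : Continuous J)
    (hne : ∃ x, F x = 0)
    (xstar : EuclideanSpace ℝ (Fin n)) (hxstar : F xstar = 0)
    (δ : ℝ) (hδ0 : 0 < δ) (hδh : δ < 1 / 2)
    (c1 : ℝ) (hc1pos : 0 < c1)
    (hc1 : ∀ x ∈ closedBall xstar (2 * δ), ∀ y ∈ closedBall xstar (2 * δ),
      ‖matCLM (J y) (x - y) - (F x - F y)‖ ≤ c1 * ‖x - y‖ ^ 2)
    (cF : ℝ) (hcFpos : 0 < cF)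
    (hcF : ∀ x ∈ closedBall xstar (2 * δ), ∀ y ∈ closedBall xstar (2 * δ),
      ‖F x - F y‖ ≤ cF * ‖x - y‖)
    (c2 : ℝ) (hc2pos : 0 < c2)
    (hc2 : ∀ x ∈ closedBall xstar (2 * δ),
      c2 * infDist x {y | F y = 0} ≤ ‖F x‖)
    (L : Matrix (Fin p) (Fin n) ℝ) (γ : ℝ) (hγ : 0 < γ)
    (hcomp : ∀ (x : EuclideanSpace ℝ (Fin n)) (v : EuclideanSpace ℝ (Fin n)),
      ‖matCLM (J x) v‖ ^ 2 + ‖matCLM L v‖ ^ 2 ≥ γ * ‖v‖ ^ 2)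
    (x : EuclideanSpace ℝ (Fin n)) (hx : x ∈ closedBall xstar δ) (hFx : F x ≠ 0)
    (d : EuclideanSpace ℝ (Fin n))
    (hd : matCLM ((J x)ᵀ * J x + ‖F x‖ ^ 2 • (Lᵀ * L)) d = -(matCLM (J x)ᵀ (F x))) :
    ‖matCLM (J x) d + F x‖ ≤ Real.sqrt (c1 ^ 2 + cF ^ 2 * ‖matCLM L‖ ^ 2) *
      infDist x {y | F y = 0} ^ 2 := by
  classical
  set S : Set (EuclideanSpace ℝ (Fin n)) := {y | F y = 0} with hS
  have hFcont : Continuous F := by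
    rw [continuous_iff_continuousAt]
    exact fun z => (hdiff z).continuousAt
  have hSclosed : IsClosed S := isClosed_eq hFcont continuous_const
  have hSne : S.Nonempty := ⟨xstar, hxstar⟩
  obtain ⟨xb, hxbS, hxbdist⟩ := hSclosed.exists_infDist_eq_dist hSne x
  set ρ : ℝ := infDist x S with hρ
  have hρ0 : 0 ≤ ρ := infDist_nonneg
  have hρδ : ρ ≤ δ := by
    have := infDist_le_dist_of_mem (x := x) (show xstar ∈ S from hxstar)
    calc ρ ≤ dist x xstar := this
    _ ≤ δ := mem_closedBall.mp hx
  have hx2 : x ∈ closedBall xstar (2 * δ) := by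
    rw [mem_closedBall] at hx ⊢; linarith
  have hxb2 : xb ∈ closedBall xstar (2 * δ) := by
    rw [mem_closedBall]
    calc dist xb xstar ≤ dist xb x + dist x xstar := dist_triangle _ _ _
      _ ≤ ρ + δ := by
          have := mem_closedBall.mp hx
          rw [dist_comm, ← hxbdist]; linarith
      _ ≤ 2 * δ := by linarith
  have hnorm : ‖xb - x‖ = ρ := by
    rw [hxbdist, dist_eq_norm, norm_sub_rev]
  set A := matCLM (J x) with hA
  set Lc := matCLM L with hLc
  set lam : ℝ := ‖F x‖ ^ 2 with hlam
  -- optimality: ∀ v, ⟪A d + F x, A v⟫ + lam * ⟪Lc d, Lc v⟫ = 0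
  have hopt : ∀ v, (inner ℝ (A d + F x) (A v) : ℝ) + lam * (inner ℝ (Lc d) (Lc v) : ℝ) = 0 := by
    intro v
    have h1 : matCLM ((J x)ᵀ * J x + lam • (Lᵀ * L)) d
        = matCLM (J x)ᵀ (A d) + lam • matCLM Lᵀ (Lc d) := by
      rw [matCLM_add, matCLM_smul, matCLM_mul, matCLM_mul]
    rw [h1] at hd
    have h2 : (inner ℝ (matCLM (J x)ᵀ (A d) + lam • matCLM Lᵀ (Lc d)) (v) : ℝ)
        = (inner ℝ (-(matCLM (J x)ᵀ (F x))) (v) : ℝ) := by rw [hd]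
    rw [inner_add_left, inner_smul_left, inner_neg_left] at h2
    simp only [starRingEnd_apply, star_trivial] at h2
    have e1 : (inner ℝ (matCLM (J x)ᵀ (A d)) (v) : ℝ) = (inner ℝ (A d) (A v) : ℝ) :=
      matCLM_adj' (J x) (A d) v
    have e2 : (inner ℝ (matCLM Lᵀ (Lc d)) (v) : ℝ) = (inner ℝ (Lc d) (Lc v) : ℝ) :=
      matCLM_adj' L (Lc d) v
    have e3 : (inner ℝ (matCLM (J x)ᵀ (F x)) (v) : ℝ) = (inner ℝ (F x) (A v) : ℝ) :=
      matCLM_adj' (J x) (F x) v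
    rw [e1, e2, e3] at h2
    rw [inner_add_left]
    linarith
  -- key inequality: φ(d) ≤ φ(v̄) with v̄ = xb - x
  set vb : EuclideanSpace ℝ (Fin n) := xb - x with hvb
  have hkey : ‖A d + F x‖ ^ 2 ≤ ‖A vb + F x‖ ^ 2 + lam * ‖Lc vb‖ ^ 2 := by
    have expand1 : ‖A vb + F x‖ ^ 2
        = ‖A d + F x‖ ^ 2 + 2 * (inner ℝ (A d + F x) (A (vb - d)) : ℝ) + ‖A (vb - d)‖ ^ 2 := by
      have : A vb + F x = (A d + F x) + A (vb - d) := by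
        rw [map_sub A vb d]; abel
      rw [this, ← real_inner_self_eq_norm_sq, ← real_inner_self_eq_norm_sq,
        ← real_inner_self_eq_norm_sq, real_inner_add_add_self]
    have expand2 : ‖Lc vb‖ ^ 2
        = ‖Lc d‖ ^ 2 + 2 * (inner ℝ (Lc d) (Lc (vb - d)) : ℝ) + ‖Lc (vb - d)‖ ^ 2 := by
      have : Lc vb = Lc d + Lc (vb - d) := by rw [map_sub Lc vb d]; abel
      rw [this, ← real_inner_self_eq_norm_sq, ← real_inner_self_eq_norm_sq,
        ← real_inner_self_eq_norm_sq, real_inner_add_add_self]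
    have hcross := hopt (vb - d)
    have hlam0 : 0 ≤ lam := sq_nonneg _
    nlinarith [norm_nonneg (A (vb - d)), norm_nonneg (Lc (vb - d)),
      sq_nonneg ‖A (vb - d)‖, sq_nonneg ‖Lc (vb - d)‖, sq_nonneg ‖Lc d‖,
      mul_nonneg hlam0 (sq_nonneg ‖Lc (vb - d)‖), mul_nonneg hlam0 (sq_nonneg ‖Lc d‖)]
  -- bound the RHS
  have hFxb : F xb = 0 := hxbS
  have hbound1 : ‖A vb + F x‖ ≤ c1 * ρ ^ 2 := by
    have := hc1 xb hxb2 x hx2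
    rw [hFxb, hnorm] at this
    have heq : A vb + F x = matCLM (J x) (xb - x) - (0 - F x) := by
      rw [hA, hvb]; abel
    rw [heq]
    simpa using this
  have hboundF : ‖F x‖ ≤ cF * ρ := by
    have := hcF x hx2 xb hxb2
    rw [hFxb, sub_zero] at this
    rw [norm_sub_rev, hnorm] at this
    exact this
  have hboundL : ‖Lc vb‖ ≤ ‖Lc‖ * ρ := by
    calc ‖Lc vb‖ ≤ ‖Lc‖ * ‖vb‖ := Lc.le_opNorm vb
      _ = ‖Lc‖ * ρ := by rw [hvb, hnorm]
  -- combine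
  have hLc0 : 0 ≤ ‖Lc‖ := norm_nonneg _
  have hsq : ‖A d + F x‖ ^ 2 ≤ (c1 ^ 2 + cF ^ 2 * ‖Lc‖ ^ 2) * (ρ ^ 2) ^ 2 := by
    have h1 : ‖A vb + F x‖ ^ 2 ≤ (c1 * ρ ^ 2) ^ 2 :=
      pow_le_pow_left₀ (norm_nonneg _) hbound1 2
    have h2a : lam ≤ (cF * ρ) ^ 2 := by
      rw [hlam]
      exact pow_le_pow_left₀ (norm_nonneg _) hboundF 2
    have h2b : ‖Lc vb‖ ^ 2 ≤ (‖Lc‖ * ρ) ^ 2 :=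
      pow_le_pow_left₀ (norm_nonneg _) hboundL 2
    have h2 : lam * ‖Lc vb‖ ^ 2 ≤ (cF * ρ) ^ 2 * (‖Lc‖ * ρ) ^ 2 :=
      mul_le_mul h2a h2b (sq_nonneg _) (sq_nonneg _)
    have hring : (c1 * ρ ^ 2) ^ 2 + (cF * ρ) ^ 2 * (‖Lc‖ * ρ) ^ 2
        = (c1 ^ 2 + cF ^ 2 * ‖Lc‖ ^ 2) * (ρ ^ 2) ^ 2 := by ring
    linarith [hkey]
  have hc4 : 0 ≤ c1 ^ 2 + cF ^ 2 * ‖Lc‖ ^ 2 := by positivity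
  calc ‖A d + F x‖ = Real.sqrt (‖A d + F x‖ ^ 2) :=
        (Real.sqrt_sq (norm_nonneg _)).symm
    _ ≤ Real.sqrt ((c1 ^ 2 + cF ^ 2 * ‖Lc‖ ^ 2) * (ρ ^ 2) ^ 2) :=
        Real.sqrt_le_sqrt hsq
    _ = Real.sqrt (c1 ^ 2 + cF ^ 2 * ‖Lc‖ ^ 2) * ρ ^ 2 := by
        rw [Real.sqrt_mul hc4, Real.sqrt_sq (sq_nonneg ρ)]
end

section
/- Let J be a real m×n matrix and L a real p×n matrix satisfying the completeness condition with constant γ > 0, let λ > 0 and F ∈ ℝᵐ, and let d solve (JᵀJ + λLᵀL)d = −JᵀF. Then the inner product of the gradient g = JᵀF with d satisfies gᵀd ≤ −γ·min{1, λ}·‖d‖². -/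
open Matrix RealInnerProductSpace

section MatCLM

variable {k l q : ℕ}

lemma matCLM_mul_apply (A : Matrix (Fin k) (Fin l) ℝ) (B : Matrix (Fin l) (Fin q) ℝ)
    (v : EuclideanSpace ℝ (Fin q)) : matCLM (A * B) v = matCLM A (matCLM B v) := by
  simp [matCLM]

lemma matCLM_add_smul_apply (A B : Matrix (Fin k) (Fin l) ℝ) (c : ℝ)
    (v : EuclideanSpace ℝ (Fin l)) : matCLM (A + c • B) v = matCLM A v + c • matCLM B v := by
  simp [matCLM]

lemma inner_matCLM_transpose_left (A : Matrix (Fin k) (Fin l) ℝ) (u : EuclideanSpace ℝ (Fin k))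
    (v : EuclideanSpace ℝ (Fin l)) : ⟪matCLM Aᵀ u, v⟫ = ⟪u, matCLM A v⟫ := by
  have hadj : matCLM Aᵀ u = (Matrix.toEuclideanLin A).adjoint u := by
    rw [← Matrix.toEuclideanLin_conjTranspose_eq_adjoint, conjTranspose_eq_transpose_of_trivial]
    rfl
  rw [hadj, LinearMap.adjoint_inner_left]
  rfl

lemma inner_matCLM_transpose_mul_self (A : Matrix (Fin k) (Fin l) ℝ)
    (v : EuclideanSpace ℝ (Fin l)) : ⟪matCLM (Aᵀ * A) v, v⟫ = ‖matCLM A v‖ ^ 2 := by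
  rw [matCLM_mul_apply, inner_matCLM_transpose_left, real_inner_self_eq_norm_sq]

lemma inner_matCLM_gram_add_smul_gram_self (J : Matrix (Fin k) (Fin l) ℝ)
    (L : Matrix (Fin q) (Fin l) ℝ) (lam : ℝ) (v : EuclideanSpace ℝ (Fin l)) :
    ⟪matCLM (Jᵀ * J + lam • (Lᵀ * L)) v, v⟫ = ‖matCLM J v‖ ^ 2 + lam * ‖matCLM L v‖ ^ 2 := by
  rw [matCLM_add_smul_apply, inner_add_left, real_inner_smul_left,
    inner_matCLM_transpose_mul_self, inner_matCLM_transpose_mul_self]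

end MatCLM

lemma min_one_mul_add_le {a b lam : ℝ} (ha : 0 ≤ a) (hb : 0 ≤ b) :
    min 1 lam * (a + b) ≤ a + lam * b := by
  have h₁ : min 1 lam * a ≤ a := mul_le_of_le_one_left ha (min_le_left _ _)
  have h₂ : min 1 lam * b ≤ lam * b := mul_le_mul_of_nonneg_right (min_le_right _ _) hb
  linarith

lemma gram_add_smul_gram_coercive {m n p : ℕ} {J : Matrix (Fin m) (Fin n) ℝ}
    {L : Matrix (Fin p) (Fin n) ℝ} {γ lam : ℝ}
    (hcomp : ∀ v : EuclideanSpace ℝ (Fin n),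
      ‖matCLM J v‖ ^ 2 + ‖matCLM L v‖ ^ 2 ≥ γ * ‖v‖ ^ 2)
    (hlam : 0 ≤ lam) (v : EuclideanSpace ℝ (Fin n)) :
    γ * min 1 lam * ‖v‖ ^ 2 ≤ ⟪matCLM (Jᵀ * J + lam • (Lᵀ * L)) v, v⟫ := by
  rw [inner_matCLM_gram_add_smul_gram_self]
  calc γ * min 1 lam * ‖v‖ ^ 2 = min 1 lam * (γ * ‖v‖ ^ 2) := by ring
    _ ≤ min 1 lam * (‖matCLM J v‖ ^ 2 + ‖matCLM L v‖ ^ 2) :=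
      mul_le_mul_of_nonneg_left (hcomp v) (le_min zero_le_one hlam)
    _ ≤ ‖matCLM J v‖ ^ 2 + lam * ‖matCLM L v‖ ^ 2 :=
      min_one_mul_add_le (sq_nonneg _) (sq_nonneg _)

theorem lmmss_descent_inequality_general
    (m n p : ℕ) (J : Matrix (Fin m) (Fin n) ℝ) (L : Matrix (Fin p) (Fin n) ℝ)
    (γ : ℝ)
    (hcomp : ∀ v : EuclideanSpace ℝ (Fin n),
      ‖matCLM J v‖ ^ 2 + ‖matCLM L v‖ ^ 2 ≥ γ * ‖v‖ ^ 2)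
    (lam : ℝ) (hlam : 0 < lam) (F : EuclideanSpace ℝ (Fin m))
    (d : EuclideanSpace ℝ (Fin n))
    (hd : matCLM (Jᵀ * J + lam • (Lᵀ * L)) d = -(matCLM Jᵀ F)) :
    ⟪matCLM Jᵀ F, d⟫ ≤ -(γ * min 1 lam * ‖d‖ ^ 2) := by
  have hgrad : matCLM Jᵀ F = -matCLM (Jᵀ * J + lam • (Lᵀ * L)) d := by rw [hd, neg_neg]
  rw [hgrad, inner_neg_left, neg_le_neg_iff]
  exact gram_add_smul_gram_coercive hcomp hlam.le d

/-- under the completeness condition with constant `γ > 0`, if `d` solves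
`(JᵀJ + λLᵀL)d = −JᵀF` then the gradient `g = JᵀF` satisfies
`gᵀd ≤ −γ·min{1, λ}·‖d‖²`. -/
theorem lmmss_descent_inequality
    (m n p : ℕ) (J : Matrix (Fin m) (Fin n) ℝ) (L : Matrix (Fin p) (Fin n) ℝ)
    (γ : ℝ) (hγ : 0 < γ)
    (hcomp : ∀ v : EuclideanSpace ℝ (Fin n),
      ‖matCLM J v‖ ^ 2 + ‖matCLM L v‖ ^ 2 ≥ γ * ‖v‖ ^ 2)
    (lam : ℝ) (hlam : 0 < lam) (F : EuclideanSpace ℝ (Fin m))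
    (d : EuclideanSpace ℝ (Fin n))
    (hd : matCLM (Jᵀ * J + lam • (Lᵀ * L)) d = -(matCLM Jᵀ F)) :
    ⟪matCLM Jᵀ F, d⟫ ≤ -(γ * min 1 lam * ‖d‖ ^ 2) :=
  lmmss_descent_inequality_general m n p J L γ hcomp lam hlam F d hd
end
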